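/- Let t ≥ 3 and let R be the standard symmetric 2t-cycle in the hypercube graph H(t,2), with vertex set V(R) = {R^0, R^1, …, R^{2t−1}} where R^0 = (1,…,1), R^k is obtained from R^{k−1} by flipping the sign of coordinate k for 1 ≤ k ≤ t, and R^{t+k} = −R^k. Then for every T ∈ {1,−1}^t there exists a unique inclusion-minimal subset Q ⊆ V(R) with ∑_{Q'∈Q} Q' = T (coordinatewise integer sum equals T), and |Q| is odd. -/

import Mathlib

/-- The standard symmetric 2t-cycle in the hypercube graph H(t,2):
`stdCycleVertex t k` is the k-th vertex (0 ≤ k < 2t), where vertex 0 is (1,…,1),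
vertex k (k ≤ t) has the first k coordinates flipped to -1, and
vertex t+k is the negative of vertex k. -/
def stdCycleVertex (t : ℕ) (k : ℕ) : Fin t → ℤ :=
  fun i => if k ≤ t then (if i.val < k then -1 else 1) else (if i.val < k - t then 1 else -1)

/-- The vertex set V(R) of the standard symmetric 2t-cycle. -/
def stdCycleVertexSet (t : ℕ) : Finset (Fin t → ℤ) :=
  (Finset.range (2 * t)).image (stdCycleVertex t)

/-!
Write `B k` (`k < t`) for the first `t` vertices; the other `t` are the `-B k`. The twisted
difference `D w = (w 0 + w (t-1), w 1 - w 0, …, w (t-1) - w (t-2))` maps `B k` to `2 • e k`, so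
the `B k` are linearly independent over `ℤ`, and a sign vector `T` is `∑ c k • B k` with
`c = D T / 2 ∈ {-1, 0, 1}ᵗ`. Removing an antipodal pair `v, -v` from a decomposition keeps its sum,
so a minimal decomposition has none; it is then the signed support of its coefficient vector,
which linear independence pins down as `c`. Every vertex has coordinate `0` equal to `±1`, as
does `T`, so a decomposition of `T` has odd size.
-/

open Finset

lemma Finset.odd_card_of_odd_sum {α : Type*} {s : Finset α} {f : α → ℤ}
    (hf : ∀ a ∈ s, Odd (f a)) (h : Odd (∑ a ∈ s, f a)) : Odd #s := by
  rw [← ZMod.natCast_eq_one_iff_odd]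
  rw [← ZMod.intCast_eq_one_iff_odd, Int.cast_sum,
    sum_congr rfl fun a ha => ZMod.intCast_eq_one_iff_odd.mpr (hf a ha)] at h
  simpa using h

section SignedRange

variable {ι M : Type*} [AddCommGroup M] {b : ι → M}

lemma LinearIndependent.add_ne_zero [Fintype ι] (hb : LinearIndependent ℤ b) (i j : ι) :
    b i + b j ≠ 0 := by
  classical
  intro h
  have key := Fintype.linearIndependent_iff.mp hb (Pi.single i 1 + Pi.single j 1)
    (by simp [add_smul, sum_add_distrib, Pi.single_apply, h]) i
  by_cases hij : j = i <;> simp [hij] at key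

lemma LinearIndependent.neg_ne [Fintype ι] (hb : LinearIndependent ℤ b) (i : ι) : -b i ≠ b i :=
  fun h => hb.add_ne_zero i i (by simpa [h] using neg_add_cancel (b i))

lemma LinearIndependent.injective_neg (hb : LinearIndependent ℤ b) : Function.Injective (-b) :=
  neg_injective.comp hb.injective

variable [DecidableEq M]

def signedCoeff (b : ι → M) (Q : Finset M) (i : ι) : ℤ :=
  (if b i ∈ Q then 1 else 0) - (if -b i ∈ Q then 1 else 0)

def IsAntipodalFree (Q : Finset M) : Prop :=
  ∀ v ∈ Q, -v ∉ Q

lemma IsAntipodalFree.mem_iff_signedCoeff_eq_one {Q : Finset M} (hQ : IsAntipodalFree Q)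
    (i : ι) : b i ∈ Q ↔ signedCoeff b Q i = 1 := by
  have := hQ (b i)
  unfold signedCoeff
  split_ifs <;> simp_all

lemma IsAntipodalFree.neg_mem_iff_signedCoeff_eq_neg_one {Q : Finset M}
    (hQ : IsAntipodalFree Q) (i : ι) : -b i ∈ Q ↔ signedCoeff b Q i = -1 := by
  have := hQ (-b i)
  rw [neg_neg] at this
  unfold signedCoeff
  split_ifs <;> simp_all

lemma sum_erase_erase_neg {Q : Finset M} {v : M} (hv : v ∈ Q) (hnv : -v ∈ Q) (hne : -v ≠ v) :
    ∑ q ∈ (Q.erase v).erase (-v), q = ∑ q ∈ Q, q := by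
  rw [← sum_erase_add _ _ hv, ← sum_erase_add _ _ (mem_erase.mpr ⟨hne, hnv⟩)]
  abel

variable [Fintype ι]

def signedRange (b : ι → M) : Finset M :=
  univ.image b ∪ univ.image (-b)

lemma mem_signedRange {v : M} : v ∈ signedRange b ↔ ∃ i, b i = v ∨ -b i = v := by
  simp [signedRange, exists_or]

lemma LinearIndependent.disjoint_image_neg (hb : LinearIndependent ℤ b) (s : Finset ι) :
    Disjoint (s.image b) (s.image (-b)) := by
  simp only [Finset.disjoint_left, mem_image, Pi.neg_apply, not_exists, not_and,
    forall_exists_index, and_imp, forall_apply_eq_imp_iff₂]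
  intro i _ j _ h
  exact hb.add_ne_zero i j (by rw [← h, neg_add_cancel])

lemma sum_eq_sum_signedCoeff_smul (hb : LinearIndependent ℤ b) {Q : Finset M}
    (hQ : Q ⊆ signedRange b) : ∑ q ∈ Q, q = ∑ i, signedCoeff b Q i • b i := by
  have hQsum : ∑ q ∈ Q, q = ∑ q ∈ signedRange b, if q ∈ Q then q else 0 := by
    rw [sum_ite_mem, inter_eq_right.mpr hQ]
  rw [hQsum, signedRange, sum_union (hb.disjoint_image_neg univ), sum_image hb.injective.injOn,
    sum_image hb.injective_neg.injOn, ← sum_add_distrib]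
  refine sum_congr rfl fun i _ => ?_
  simp only [signedCoeff, Pi.neg_apply]
  split_ifs <;> simp

lemma IsAntipodalFree.eq_of_signedCoeff_eq {Q Q' : Finset M}
    (hQ : Q ⊆ signedRange b) (hQ' : Q' ⊆ signedRange b)
    (hQa : IsAntipodalFree Q) (hQ'a : IsAntipodalFree Q')
    (h : signedCoeff b Q = signedCoeff b Q') : Q = Q' := by
  have hmem : ∀ v ∈ signedRange b, v ∈ Q ↔ v ∈ Q' := by
    intro v hv
    obtain ⟨i, rfl | rfl⟩ := mem_signedRange.mp hv
    · rw [hQa.mem_iff_signedCoeff_eq_one, hQ'a.mem_iff_signedCoeff_eq_one, h]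
    · rw [hQa.neg_mem_iff_signedCoeff_eq_neg_one, hQ'a.neg_mem_iff_signedCoeff_eq_neg_one, h]
  ext v
  exact ⟨fun hv => (hmem v (hQ hv)).mp hv, fun hv => (hmem v (hQ' hv)).mpr hv⟩

lemma IsAntipodalFree.eq_of_sum_eq (hb : LinearIndependent ℤ b) {Q Q' : Finset M}
    (hQ : Q ⊆ signedRange b) (hQ' : Q' ⊆ signedRange b)
    (hQa : IsAntipodalFree Q) (hQ'a : IsAntipodalFree Q')
    (h : ∑ q ∈ Q, q = ∑ q ∈ Q', q) : Q = Q' := by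
  refine hQa.eq_of_signedCoeff_eq hQ hQ' hQ'a ?_
  have := Fintype.linearIndependent_iff.mp hb (signedCoeff b Q - signedCoeff b Q')
    (by simp [sub_smul, sum_sub_distrib, ← sum_eq_sum_signedCoeff_smul hb hQ,
      ← sum_eq_sum_signedCoeff_smul hb hQ', h])
  funext i
  simpa [sub_eq_zero] using this i

lemma isAntipodalFree_of_minimal (hb : LinearIndependent ℤ b) {Q : Finset M}
    (hQ : Q ⊆ signedRange b)
    (hmin : ∀ Q' ⊆ signedRange b, ∑ q ∈ Q', q = ∑ q ∈ Q, q → ¬ Q' ⊂ Q) :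
    IsAntipodalFree Q := by
  intro v hv hnv
  have hne : -v ≠ v := by
    obtain ⟨i, rfl | rfl⟩ := mem_signedRange.mp (hQ hv)
    · exact hb.neg_ne i
    · rw [neg_neg]; exact (hb.neg_ne i).symm
  have hsub : (Q.erase v).erase (-v) ⊂ Q :=
    (erase_subset _ _).trans_ssubset (erase_ssubset hv)
  exact hmin _ (hsub.subset.trans hQ) (sum_erase_erase_neg hv hnv hne) hsub

lemma exists_subset_signedRange_sum_eq (hb : LinearIndependent ℤ b) {c : ι → ℤ}
    (hc : ∀ i, c i = 1 ∨ c i = 0 ∨ c i = -1) :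
    ∃ Q ⊆ signedRange b, ∑ q ∈ Q, q = ∑ i, c i • b i := by
  classical
  set P := univ.filter fun i => c i = 1
  set N := univ.filter fun i => c i = -1
  have hPN : Disjoint (P.image b) (N.image (-b)) :=
    (hb.disjoint_image_neg univ).mono (image_subset_image (subset_univ _))
      (image_subset_image (subset_univ _))
  refine ⟨P.image b ∪ N.image (-b),
    union_subset_union (image_subset_image (subset_univ _)) (image_subset_image (subset_univ _)),
    ?_⟩
  rw [sum_union hPN, sum_image hb.injective.injOn, sum_image hb.injective_neg.injOn,
    sum_filter, sum_filter, ← sum_add_distrib]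
  refine sum_congr rfl fun i _ => ?_
  rcases hc i with h | h | h <;> simp [h]

theorem existsUnique_minimal_subset_signedRange (hb : LinearIndependent ℤ b) {c : ι → ℤ}
    (hc : ∀ i, c i = 1 ∨ c i = 0 ∨ c i = -1) :
    ∃! Q : Finset M, Q ⊆ signedRange b ∧ ∑ q ∈ Q, q = ∑ i, c i • b i ∧
      ∀ Q' ⊆ signedRange b, ∑ q ∈ Q', q = ∑ i, c i • b i → ¬ Q' ⊂ Q := by
  obtain ⟨Q, hQ⟩ := exists_minimal_of_wellFoundedLT
    (fun Q : Finset M => Q ⊆ signedRange b ∧ ∑ q ∈ Q, q = ∑ i, c i • b i)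
    (exists_subset_signedRange_sum_eq hb hc)
  obtain ⟨hQV, hQsum⟩ := hQ.prop
  have hQmin : ∀ Q' ⊆ signedRange b, ∑ q ∈ Q', q = ∑ i, c i • b i → ¬ Q' ⊂ Q :=
    fun Q' hQ' hsum hlt => hQ.not_prop_of_lt hlt ⟨hQ', hsum⟩
  refine ⟨Q, ⟨hQV, hQsum, hQmin⟩, ?_⟩
  rintro Q' ⟨hQ'V, hQ'sum, hQ'min⟩
  refine (isAntipodalFree_of_minimal hb hQ'V (hQ'sum ▸ hQ'min)).eq_of_sum_eq hb hQ'V hQV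
    (isAntipodalFree_of_minimal hb hQV (hQsum ▸ hQmin)) (hQ'sum.trans hQsum.symm)

end SignedRange

lemma stdCycleVertex_add {t k : ℕ} (hk : k < t) :
    stdCycleVertex t (t + k) = -stdCycleVertex t k := by
  funext i
  simp only [stdCycleVertex, Pi.neg_apply]
  split_ifs <;> omega

lemma stdCycleVertexSet_eq_signedRange (t : ℕ) :
    stdCycleVertexSet t = signedRange (fun k : Fin t => stdCycleVertex t k) := by
  ext v
  simp only [stdCycleVertexSet, mem_image, mem_range, mem_signedRange]
  constructor
  · rintro ⟨k, hk, rfl⟩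
    by_cases hkt : k < t
    · exact ⟨⟨k, hkt⟩, Or.inl rfl⟩
    · refine ⟨⟨k - t, by omega⟩, Or.inr ?_⟩
      rw [← stdCycleVertex_add (by omega), Nat.add_sub_cancel' (by omega)]
  · rintro ⟨k, rfl | rfl⟩
    · exact ⟨k, by omega, rfl⟩
    · exact ⟨t + k, by omega, stdCycleVertex_add k.is_lt⟩

lemma odd_of_mem_stdCycleVertexSet {t : ℕ} {v : Fin t → ℤ} (hv : v ∈ stdCycleVertexSet t)
    (i : Fin t) : Odd (v i) := by
  obtain ⟨k, -, rfl⟩ := mem_image.mp hv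
  simp only [stdCycleVertex]
  split_ifs <;> decide

def twistedDiff (t : ℕ) : (Fin t → ℤ) →ₗ[ℤ] (Fin t → ℤ) where
  toFun w
    | ⟨0, h⟩ => w ⟨0, h⟩ + w ⟨t - 1, by omega⟩
    | ⟨i + 1, h⟩ => w ⟨i + 1, h⟩ - w ⟨i, by omega⟩
  map_add' w w' := by
    ext ⟨_ | i, h⟩ <;> simp only [Pi.add_apply] <;> ring
  map_smul' a w := by
    ext ⟨_ | i, h⟩ <;> simp only [Pi.smul_apply, smul_eq_mul, RingHom.id_apply] <;> ring

lemma twistedDiff_injective (t : ℕ) : Function.Injective (twistedDiff t) := by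
  refine (injective_iff_map_eq_zero _).mpr fun w hw => ?_
  have hconst : ∀ i (h : i < t), w ⟨i, h⟩ = w ⟨0, by omega⟩ := by
    intro i h
    induction i with
    | zero => rfl
    | succ i ih =>
      have := congrFun hw ⟨i + 1, h⟩
      simp only [twistedDiff, LinearMap.coe_mk, AddHom.coe_mk, Pi.zero_apply] at this
      rw [← ih (by omega)]
      omega
  funext ⟨i, h⟩
  have h0 := congrFun hw ⟨0, by omega⟩
  simp only [twistedDiff, LinearMap.coe_mk, AddHom.coe_mk, Pi.zero_apply] at h0
  rw [hconst (t - 1) (by omega)] at h0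
  rw [hconst i h, Pi.zero_apply]
  omega

lemma twistedDiff_stdCycleVertex {t : ℕ} (k : Fin t) :
    twistedDiff t (stdCycleVertex t k) = Pi.single k 2 := by
  have hk : (k : ℕ) ≤ t := k.is_lt.le
  ext ⟨_ | i, h⟩ <;>
    simp only [twistedDiff, stdCycleVertex, LinearMap.coe_mk, AddHom.coe_mk, Pi.single_apply,
      Fin.ext_iff, hk, if_true] <;> split_ifs <;> omega

lemma twistedDiff_sum_smul_stdCycleVertex {t : ℕ} (c : Fin t → ℤ) :
    twistedDiff t (∑ k, c k • stdCycleVertex t k) = 2 • c := by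
  simp only [map_sum, map_zsmul, twistedDiff_stdCycleVertex, ← Pi.single_smul, smul_eq_mul]
  rw [← univ_sum_single (2 • c)]
  simp [mul_comm]

lemma linearIndependent_stdCycleVertex (t : ℕ) :
    LinearIndependent ℤ (fun k : Fin t => stdCycleVertex t k) := by
  refine Fintype.linearIndependent_iff.mpr fun c hc k => ?_
  have := congrFun (twistedDiff_sum_smul_stdCycleVertex c) k
  rw [hc, map_zero, Pi.zero_apply, Pi.smul_apply, nsmul_eq_mul, Nat.cast_ofNat] at this
  omega

lemma twistedDiff_apply_of_sign {t : ℕ} {T : Fin t → ℤ} (hT : ∀ i, T i = 1 ∨ T i = -1)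
    (k : Fin t) : twistedDiff t T k = 2 ∨ twistedDiff t T k = 0 ∨ twistedDiff t T k = -2 := by
  obtain ⟨_ | i, h⟩ := k <;>
    simp only [twistedDiff, LinearMap.coe_mk, AddHom.coe_mk]
  · rcases hT ⟨0, h⟩ with h1 | h1 <;> rcases hT ⟨t - 1, by omega⟩ with h2 | h2 <;> omega
  · rcases hT ⟨i + 1, h⟩ with h1 | h1 <;> rcases hT ⟨i, by omega⟩ with h2 | h2 <;> omega

lemma exists_sum_smul_stdCycleVertex_eq {t : ℕ} {T : Fin t → ℤ}
    (hT : ∀ i, T i = 1 ∨ T i = -1) :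
    ∃ c : Fin t → ℤ, (∀ k, c k = 1 ∨ c k = 0 ∨ c k = -1) ∧
      ∑ k, c k • stdCycleVertex t k = T := by
  refine ⟨fun k => twistedDiff t T k / 2, fun k => ?_, twistedDiff_injective t ?_⟩
  · rcases twistedDiff_apply_of_sign hT k with h | h | h <;> simp [h]
  · rw [twistedDiff_sum_smul_stdCycleVertex]
    funext k
    rcases twistedDiff_apply_of_sign hT k with h | h | h <;> simp [h]

theorem stmt_12 (t : ℕ) (ht : 3 ≤ t) (T : Fin t → ℤ)
    (hT : ∀ i, T i = 1 ∨ T i = -1) :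
    (∃! Q : Finset (Fin t → ℤ),
      Q ⊆ stdCycleVertexSet t ∧ (∑ q ∈ Q, q) = T ∧
        ∀ Q' ⊆ stdCycleVertexSet t, (∑ q ∈ Q', q) = T → ¬ Q' ⊂ Q) ∧
    (∀ Q : Finset (Fin t → ℤ),
      Q ⊆ stdCycleVertexSet t → (∑ q ∈ Q, q) = T →
        (∀ Q' ⊆ stdCycleVertexSet t, (∑ q ∈ Q', q) = T → ¬ Q' ⊂ Q) →
        Odd Q.card) := by
  refine ⟨?_, fun Q hQ hsum _ => ?_⟩
  · obtain ⟨c, hc, rfl⟩ := exists_sum_smul_stdCycleVertex_eq hT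
    rw [stdCycleVertexSet_eq_signedRange]
    exact existsUnique_minimal_subset_signedRange (linearIndependent_stdCycleVertex t) hc
  · let i : Fin t := ⟨0, by omega⟩
    refine Finset.odd_card_of_odd_sum (f := fun q => q i)
      (fun q hq => odd_of_mem_stdCycleVertexSet (hQ hq) i) ?_
    rw [← Finset.sum_apply, hsum]
    rcases hT i with h | h <;> rw [h] <;> decide
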